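/- Fix a positive integer m, and for real a > m and x > −(a−m)/2 define, for 1 ≤ i ≤ m, g_i(x) = ((a−i)/2 + x)·log((a−i)/2 + x) − ((a−1)/2 + x)·log((a−1)/2 + x). Let (a_k) and (t_k) be real sequences with a_k → ∞ and t_k/a_k → 0 (hence m·t_k²/a_k² → 0). Then, as k → ∞, Σ_{i=1}^{m} [g_i(t_k) − g_i(0)] − μ_{a_k}·t_k − (σ_{a_k}²/2)·t_k² → 0, where g_i is formed with a = a_k. -/

import Mathlib

/-!
Each of the three terms tends to `0` on its own when `t = o(a)`. The difference
`g_i(t) - g_i(0)` is a second difference of `y ↦ y log y`, whose second derivative `1 / y` is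
`O(1 / a)` on the relevant range, so it is `O(m |t| / a)` by the mean value inequality. With
`x = m / (a - 1)`, the bound `|x + log (1 - x)| ≤ 2 x²` gives `σ_a² = O(m² / a²)` and
`μ_a = O(m² / a)`.
-/

open Filter

/-- `μ_a = −(m − a + 3/2)·log(1 − m/(a−1)) + (a−1)m/a`. -/
noncomputable def muA (m : ℕ) (a : ℝ) : ℝ :=
  -((m : ℝ) - a + 3 / 2) * Real.log (1 - (m : ℝ) / (a - 1)) + (a - 1) * (m : ℝ) / a

/-- `σ_a² = −2[m/(a−1) + log(1 − m/(a−1))]`. -/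
noncomputable def sigmaSqA (m : ℕ) (a : ℝ) : ℝ :=
  -2 * ((m : ℝ) / (a - 1) + Real.log (1 - (m : ℝ) / (a - 1)))

/-- `g_i(x) = ((a−i)/2 + x) log((a−i)/2 + x) − ((a−1)/2 + x) log((a−1)/2 + x)`. -/
noncomputable def gFun (a : ℝ) (i : ℕ) (x : ℝ) : ℝ :=
  ((a - (i : ℝ)) / 2 + x) * Real.log ((a - (i : ℝ)) / 2 + x) -
    ((a - 1) / 2 + x) * Real.log ((a - 1) / 2 + x)

open Real Set Topology

lemma abs_log_one_sub_le {x : ℝ} (hx : |x| ≤ 1 / 2) : |log (1 - x)| ≤ 2 * |x| := by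
  have h := abs_log_sub_add_sum_range_le (hx.trans_lt (by norm_num)) 0
  simp only [Finset.range_zero, Finset.sum_empty, zero_add, pow_one] at h
  calc |log (1 - x)| ≤ |x| / (1 - |x|) := h
    _ ≤ 2 * |x| := by
      rw [div_le_iff₀ (by linarith)]
      nlinarith [abs_nonneg x]

lemma abs_add_log_one_sub_le {x : ℝ} (hx : |x| ≤ 1 / 2) : |x + log (1 - x)| ≤ 2 * x ^ 2 := by
  have h := abs_log_sub_add_sum_range_le (hx.trans_lt (by norm_num)) 1
  simp only [Finset.sum_range_one, zero_add, pow_one, Nat.cast_zero, div_one] at h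
  calc |x + log (1 - x)| ≤ |x| ^ 2 / (1 - |x|) := h
    _ ≤ 2 * x ^ 2 := by
      rw [div_le_iff₀ (by linarith), sq_abs]
      nlinarith [mul_nonneg (sq_nonneg x) (by linarith : 0 ≤ 1 - 2 * |x|)]

lemma abs_mul_log_second_difference_le {t b c₁ c₂ : ℝ} (hb : 0 < b) (ht : 2 * |t| ≤ b)
    (hbc : b ≤ c₁) (hc : c₁ ≤ c₂) :
    |((c₂ + t) * log (c₂ + t) - c₂ * log c₂) - ((c₁ + t) * log (c₁ + t) - c₁ * log c₁)|
      ≤ 2 * |t| / b * (c₂ - c₁) := by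
  have hderiv : ∀ c ∈ Icc c₁ c₂, HasDerivWithinAt (fun c => (c + t) * log (c + t) - c * log c)
      (log (1 + t / c)) (Icc c₁ c₂) c := by
    intro c hc
    have hc₀ : 0 < c := by linarith [hc.1]
    have hct : 0 < c + t := by linarith [hc.1, neg_abs_le t, abs_nonneg t]
    have h := ((hasDerivAt_mul_log hct.ne').comp c ((hasDerivAt_id c).add_const t)).sub
      (hasDerivAt_mul_log hc₀.ne')
    refine (h.congr_deriv ?_).hasDerivWithinAt
    rw [show 1 + t / c = (c + t) / c by field_simp, log_div hct.ne' hc₀.ne']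
    ring
  have hbound : ∀ c ∈ Ico c₁ c₂, ‖log (1 + t / c)‖ ≤ 2 * |t| / b := by
    intro c hc
    have hc₀ : 0 < c := by linarith [hc.1]
    have htc : |t / c| ≤ |t| / b := by
      rw [abs_div, abs_of_pos hc₀]
      exact div_le_div_of_nonneg_left (abs_nonneg t) hb (hbc.trans hc.1)
    have hhalf : |-(t / c)| ≤ 1 / 2 := by
      rw [abs_neg]
      exact htc.trans ((div_le_iff₀ hb).2 (by linarith))
    calc ‖log (1 + t / c)‖ = |log (1 - -(t / c))| := by rw [sub_neg_eq_add, Real.norm_eq_abs]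
      _ ≤ 2 * |t / c| := by simpa using abs_log_one_sub_le hhalf
      _ ≤ 2 * |t| / b := by rw [mul_div_assoc]; gcongr
  simpa using norm_image_sub_le_of_norm_deriv_le_segment' hderiv hbound c₂ (right_mem_Icc.2 hc)

lemma abs_gFun_sub_gFun_zero_le {m i : ℕ} (hi : 1 ≤ i) (him : i ≤ m) {a t : ℝ}
    (ham : (m : ℝ) < a) (ht : 4 * |t| ≤ a - m) :
    |gFun a i t - gFun a i 0| ≤ 2 * m * |t / (a - m)| := by
  have hi' : (1 : ℝ) ≤ i := by exact_mod_cast hi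
  have him' : (i : ℝ) ≤ m := by exact_mod_cast him
  have hdiff := abs_mul_log_second_difference_le (t := t) (b := (a - m) / 2)
    (c₁ := (a - i) / 2) (c₂ := (a - 1) / 2) (by linarith) (by linarith) (by linarith)
    (by linarith)
  have hg : gFun a i t - gFun a i 0 =
      -(((a - 1) / 2 + t) * log ((a - 1) / 2 + t) - (a - 1) / 2 * log ((a - 1) / 2) -
        (((a - i) / 2 + t) * log ((a - i) / 2 + t) - (a - i) / 2 * log ((a - i) / 2))) := by
    simp only [gFun, add_zero]
    ring
  have ham' : 0 < a - m := sub_pos.2 ham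
  rw [hg, abs_neg]
  calc _ ≤ 2 * |t| / ((a - m) / 2) * ((a - 1) / 2 - (a - i) / 2) := hdiff
    _ = (i - 1) * (2 * |t / (a - m)|) := by
      rw [abs_div, abs_of_pos ham']
      field_simp
      ring
    _ ≤ 2 * m * |t / (a - m)| := by nlinarith [abs_nonneg (t / (a - m))]

lemma abs_natCast_div_sub_one_le_half {m : ℕ} {a : ℝ} (ha : 2 * m + 1 < a) :
    |(m : ℝ) / (a - 1)| ≤ 1 / 2 := by
  rw [abs_of_nonneg (div_nonneg m.cast_nonneg (by linarith)), div_le_iff₀ (by linarith)]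
  linarith

lemma muA_eq (m : ℕ) {a : ℝ} (ha₀ : a ≠ 0) (ha₁ : a - 1 ≠ 0) :
    muA m a = (a - 1) * (m / (a - 1) + log (1 - m / (a - 1)))
      - (m + 1 / 2) * log (1 - m / (a - 1)) - m / a := by
  unfold muA
  field_simp
  ring

lemma abs_muA_le (m : ℕ) {a : ℝ} (ha : 2 * m + 1 < a) :
    |muA m a| ≤ 2 * (2 * m + 1) * (m / (a - 1)) := by
  have ha₁ : 0 < a - 1 := by linarith [m.cast_nonneg (α := ℝ)]
  have hx := abs_natCast_div_sub_one_le_half ha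
  set x : ℝ := m / (a - 1) with hx_def
  have hx₀ : 0 ≤ x := div_nonneg m.cast_nonneg ha₁.le
  have hmx : (a - 1) * x = m := by rw [hx_def]; field_simp
  have hE : |(a - 1) * (x + log (1 - x))| ≤ 2 * m * x := by
    rw [abs_mul, abs_of_pos ha₁]
    calc (a - 1) * |x + log (1 - x)| ≤ (a - 1) * (2 * x ^ 2) := by
          gcongr; exact abs_add_log_one_sub_le hx
      _ = 2 * ((a - 1) * x) * x := by ring
      _ = 2 * m * x := by rw [hmx]
  have hL : |(m + 1 / 2) * log (1 - x)| ≤ (2 * m + 1) * x := by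
    rw [abs_mul, abs_of_pos (by positivity)]
    calc (m + 1 / 2) * |log (1 - x)| ≤ (m + 1 / 2) * (2 * x) := by
          gcongr; simpa [abs_of_nonneg hx₀] using abs_log_one_sub_le hx
      _ = (2 * m + 1) * x := by ring
  have hC : |(m : ℝ) / a| ≤ x := by
    rw [abs_of_nonneg (div_nonneg m.cast_nonneg (by linarith))]
    exact div_le_div_of_nonneg_left m.cast_nonneg ha₁ (by linarith)
  rw [muA_eq m (by linarith) ha₁.ne']
  calc _ ≤ |(a - 1) * (x + log (1 - x))| + |(m + 1 / 2) * log (1 - x)| + |(m : ℝ) / a| :=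
        (abs_sub _ _).trans (add_le_add_left (abs_sub _ _) _)
    _ ≤ 2 * (2 * m + 1) * x := by linarith

lemma abs_sigmaSqA_le (m : ℕ) {a : ℝ} (ha : 2 * m + 1 < a) :
    |sigmaSqA m a| ≤ 4 * (m / (a - 1)) ^ 2 := by
  unfold sigmaSqA
  rw [abs_mul, abs_neg, abs_two]
  linarith [abs_add_log_one_sub_le (abs_natCast_div_sub_one_le_half ha)]

lemma Filter.Tendsto.div_sub_const {ι : Type*} {l : Filter ι} {a t : ι → ℝ}
    (ha : Tendsto a l atTop) (hta : Tendsto (fun k => t k / a k) l (𝓝 0)) (c : ℝ) :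
    Tendsto (fun k => t k / (a k - c)) l (𝓝 0) := by
  have hratio : Tendsto (fun k => (1 - c / a k)⁻¹) l (𝓝 1) := by
    simpa using
      (tendsto_const_nhds.sub (ha.const_div_atTop c)).inv₀ (by norm_num : (1 : ℝ) - 0 ≠ 0)
  refine Tendsto.congr' ?_ (by simpa using hta.mul hratio)
  filter_upwards [ha.eventually_gt_atTop (max 0 c)] with k hk
  have h₀ : a k ≠ 0 := by linarith [le_max_left 0 c]
  have hc : a k - c ≠ 0 := by linarith [le_max_right 0 c]
  field_simp

section Limits

variable {ι : Type*} {l : Filter ι} {a t : ι → ℝ} (m : ℕ)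

lemma tendsto_sum_gFun_sub_gFun_zero (ha : Tendsto a l atTop)
    (hta : Tendsto (fun k => t k / a k) l (𝓝 0)) :
    Tendsto (fun k => ∑ i ∈ Finset.Icc 1 m, (gFun (a k) i (t k) - gFun (a k) i 0)) l (𝓝 0) := by
  have hs : Tendsto (fun k => |t k / (a k - m)|) l (𝓝 0) := by
    simpa using (ha.div_sub_const hta m).abs
  have hlarge : ∀ᶠ k in l, (m : ℝ) < a k ∧ 4 * |t k| ≤ a k - m := by
    filter_upwards [ha.eventually_gt_atTop (m : ℝ),
      hs.eventually_le_const (by norm_num : (0 : ℝ) < 1 / 4)] with k hak hsk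
    have ham : 0 < a k - m := sub_pos.2 hak
    rw [abs_div, abs_of_pos ham, div_le_iff₀ ham] at hsk
    exact ⟨hak, by linarith⟩
  have hterm : ∀ i ∈ Finset.Icc 1 m,
      Tendsto (fun k => gFun (a k) i (t k) - gFun (a k) i 0) l (𝓝 0) := by
    intro i hi
    obtain ⟨hi₁, him⟩ := Finset.mem_Icc.1 hi
    refine squeeze_zero_norm' (a := fun k => 2 * m * |t k / (a k - m)|) ?_
      (by simpa using hs.const_mul (2 * m : ℝ))
    filter_upwards [hlarge] with k hk
    exact abs_gFun_sub_gFun_zero_le hi₁ him hk.1 hk.2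
  simpa using tendsto_finsetSum _ hterm

lemma tendsto_muA_mul (ha : Tendsto a l atTop) (hta : Tendsto (fun k => t k / a k) l (𝓝 0)) :
    Tendsto (fun k => muA m (a k) * t k) l (𝓝 0) := by
  refine squeeze_zero_norm' (a := fun k => 2 * (2 * m + 1) * m * |t k / (a k - 1)|) ?_
    (by simpa using (ha.div_sub_const hta 1).abs.const_mul (2 * (2 * m + 1) * m : ℝ))
  filter_upwards [ha.eventually_gt_atTop (2 * m + 1 : ℝ)] with k hk
  have ha₁ : 0 < a k - 1 := by linarith [m.cast_nonneg (α := ℝ)]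
  calc ‖muA m (a k) * t k‖ = |muA m (a k)| * |t k| := abs_mul _ _
    _ ≤ 2 * (2 * m + 1) * (m / (a k - 1)) * |t k| := by gcongr; exact abs_muA_le m hk
    _ = 2 * (2 * m + 1) * m * |t k / (a k - 1)| := by rw [abs_div, abs_of_pos ha₁]; ring

lemma tendsto_sigmaSqA_mul_sq (ha : Tendsto a l atTop)
    (hta : Tendsto (fun k => t k / a k) l (𝓝 0)) :
    Tendsto (fun k => (sigmaSqA m (a k) / 2) * t k ^ 2) l (𝓝 0) := by
  refine squeeze_zero_norm' (a := fun k => 2 * m ^ 2 * (t k / (a k - 1)) ^ 2) ?_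
    (by simpa using ((ha.div_sub_const hta 1).pow 2).const_mul (2 * m ^ 2 : ℝ))
  filter_upwards [ha.eventually_gt_atTop (2 * m + 1 : ℝ)] with k hk
  calc ‖sigmaSqA m (a k) / 2 * t k ^ 2‖ = |sigmaSqA m (a k)| / 2 * t k ^ 2 := by
        rw [Real.norm_eq_abs, abs_mul, abs_div, abs_two, abs_of_nonneg (sq_nonneg (t k))]
    _ ≤ 4 * (m / (a k - 1)) ^ 2 / 2 * t k ^ 2 := by gcongr; exact abs_sigmaSqA_le m hk
    _ = 2 * m ^ 2 * (t k / (a k - 1)) ^ 2 := by ring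

end Limits

theorem gFun_sum_expansion_general (m : ℕ) (a t : ℕ → ℝ)
    (ha : Tendsto a atTop atTop)
    (hta : Tendsto (fun k => t k / a k) atTop (nhds 0)) :
    Tendsto (fun k =>
        (∑ i ∈ Finset.Icc 1 m, (gFun (a k) i (t k) - gFun (a k) i 0)) -
          muA m (a k) * t k - (sigmaSqA m (a k) / 2) * t k ^ 2)
      atTop (nhds 0) := by
  simpa using ((tendsto_sum_gFun_sub_gFun_zero m ha hta).sub (tendsto_muA_mul m ha hta)).sub
    (tendsto_sigmaSqA_mul_sq m ha hta)

/-- Lemma 4: for fixed `m`, if `a_k → ∞` and `t_k/a_k → 0` then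
`Σ_{i=1}^m [g_i(t_k) − g_i(0)] − μ_{a_k} t_k − (σ_{a_k}²/2) t_k² → 0`. -/
theorem gFun_sum_expansion (m : ℕ) (hm : 0 < m) (a t : ℕ → ℝ)
    (ha : Tendsto a atTop atTop)
    (hta : Tendsto (fun k => t k / a k) atTop (nhds 0)) :
    Tendsto (fun k =>
        (∑ i ∈ Finset.Icc 1 m, (gFun (a k) i (t k) - gFun (a k) i 0)) -
          muA m (a k) * t k - (sigmaSqA m (a k) / 2) * t k ^ 2)
      atTop (nhds 0) :=
  gFun_sum_expansion_general m a t ha hta
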